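/- For every third-order tensor A : Fin n₁ → Fin n₂ → Fin n₃ → ℂ, the mode-1 multi-tubal rank is bounded by the ranks of the mode-2 and mode-3 matricizations: r₁(A) ≤ min( rank(A_(2)), rank(A_(3)) ). -/
import Mathlib


/-- The `l`-th mode-1 DFT slice of a third-order tensor. -/
noncomputable def mode1DftSlice {n₂ n₃ : ℕ} (n₁ : ℕ) (A : Fin n₁ → Fin n₂ → Fin n₃ → ℂ)
    (l : Fin n₁) : Matrix (Fin n₂) (Fin n₃) ℂ :=
  Matrix.of fun j k =>
    ∑ i : Fin n₁, Complex.exp (-2 * Real.pi * Complex.I * (l : ℕ) * (i : ℕ) / (n₁ : ℕ)) * A i j k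

/-- The mode-1 tubal rank `r₁(A)`. -/
noncomputable def mode1TubalRank {n₂ n₃ : ℕ} (n₁ : ℕ) (A : Fin n₁ → Fin n₂ → Fin n₃ → ℂ) : ℕ :=
  Finset.univ.sup fun l : Fin n₁ => (mode1DftSlice n₁ A l).rank

/-- The mode-2 matricization `A_(2)`. -/
def mat2 {n₁ n₂ n₃ : ℕ} (A : Fin n₁ → Fin n₂ → Fin n₃ → ℂ) :
    Matrix (Fin n₂) (Fin n₁ × Fin n₃) ℂ :=
  Matrix.of fun j ik => A ik.1 j ik.2

/-- The mode-3 matricization `A_(3)`. -/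
def mat3 {n₁ n₂ n₃ : ℕ} (A : Fin n₁ → Fin n₂ → Fin n₃ → ℂ) :
    Matrix (Fin n₃) (Fin n₁ × Fin n₂) ℂ :=
  Matrix.of fun k ij => A ij.1 ij.2 k

/-- The mode-1 multi-tubal rank is bounded by the ranks of the mode-2 and mode-3
matricizations: `r₁(A) ≤ min (rank A_(2)) (rank A_(3))`. -/
theorem mode1TubalRank_le (n₁ n₂ n₃ : ℕ) (A : Fin n₁ → Fin n₂ → Fin n₃ → ℂ) :
    mode1TubalRank n₁ A ≤ min (mat2 A).rank (mat3 A).rank := by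
  refine Finset.sup_le fun l _ => le_min ?_ ?_
  · set c : Fin n₁ → ℂ := fun i =>
      Complex.exp (-2 * Real.pi * Complex.I * (l : ℕ) * (i : ℕ) / (n₁ : ℕ)) with hc
    have h : mode1DftSlice n₁ A l =
        (mat2 A) * Matrix.of (fun ik : Fin n₁ × Fin n₃ => fun k' : Fin n₃ =>
          if ik.2 = k' then c ik.1 else 0) := by
      ext j k'
      simp only [mode1DftSlice, mat2, Matrix.mul_apply, Matrix.of_apply,
        Fintype.sum_prod_type, mul_ite, mul_zero]
      simp [Finset.sum_ite_eq', mul_comm, hc]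
    rw [h]
    exact Matrix.rank_mul_le_left _ _
  · set c : Fin n₁ → ℂ := fun i =>
      Complex.exp (-2 * Real.pi * Complex.I * (l : ℕ) * (i : ℕ) / (n₁ : ℕ)) with hc
    have h : (mode1DftSlice n₁ A l).transpose =
        (mat3 A) * Matrix.of (fun ij : Fin n₁ × Fin n₂ => fun j' : Fin n₂ =>
          if ij.2 = j' then c ij.1 else 0) := by
      ext k j'
      simp only [mode1DftSlice, mat3, Matrix.mul_apply, Matrix.of_apply,
        Matrix.transpose_apply, Fintype.sum_prod_type, mul_ite, mul_zero]
      simp [Finset.sum_ite_eq', mul_comm, hc]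
    calc (mode1DftSlice n₁ A l).rank = (mode1DftSlice n₁ A l).transpose.rank :=
          (Matrix.rank_transpose _).symm
      _ ≤ (mat3 A).rank := by rw [h]; exact Matrix.rank_mul_le_left _ _
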